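/- Let T : ℝᵏ → ℝᵏ be a Borel bimeasurable bijection preserving Lebesgue measure. Then Lebesgue-almost every point of ℝᵏ is either recurrent or has empty ω-limit set (its forward orbit leaves every compact set). -/

import Mathlib

/-!
A set `A` whose points never come back to it has pairwise disjoint forward images, so for a set
`K` of finite measure, measure preservation gives `∑ₙ μ (A ∩ f^[n] ⁻¹' K) = ∑ₙ μ (f^[n] '' A ∩ K)
≤ μ K`, and by Borel–Cantelli almost no point of `A` visits `K` infinitely often. Hence `f` is
conservative on the invariant set of points visiting `K` infinitely often, and Poincaré recurrence
applies there. A point with a nonempty ω-limit set visits infinitely often one of countably many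
open sets of finite measure covering the space.
-/

open MeasureTheory Filter Set Function Topology

theorem MeasurableEmbedding.iterate {α : Type*} [MeasurableSpace α] {f : α → α}
    (hf : MeasurableEmbedding f) (n : ℕ) : MeasurableEmbedding f^[n] := by
  induction n with
  | zero => exact MeasurableEmbedding.id
  | succ n ih => rw [iterate_succ]; exact ih.comp hf

namespace Function

variable {α : Type*} {f : α → α}

theorem Injective.pairwise_disjoint_image_iterate (hf : Injective f) {A : Set α}
    (hA : ∀ x ∈ A, ∀ n ≠ 0, f^[n] x ∉ A) : Pairwise (Disjoint on fun n => f^[n] '' A) := by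
  suffices ∀ i j, i < j → Disjoint (f^[i] '' A) (f^[j] '' A) from
    fun i j hij => hij.lt_or_gt.elim (this i j) fun h => (this j i h).symm
  intro i j hij
  rw [disjoint_left]
  rintro _ ⟨a, ha, rfl⟩ ⟨b, hb, hba⟩
  have : f^[i] (f^[j - i] b) = f^[i] a := by
    rw [← iterate_add_apply, Nat.add_sub_cancel' hij.le, hba]
  exact hA b hb (j - i) (by omega) (hf.iterate i this ▸ ha)

theorem mapsTo_setOf_frequently_iterate_mem (f : α → α) (K : Set α) :
    MapsTo f {x | ∃ᶠ n in atTop, f^[n] x ∈ K} {x | ∃ᶠ n in atTop, f^[n] x ∈ K} := by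
  intro x hx
  rw [mem_ofPred_eq, frequently_atTop] at hx ⊢
  intro a
  obtain ⟨b, hab, hb⟩ := hx (a + 1)
  exact ⟨b - 1, by omega, by rwa [← iterate_succ_apply, Nat.succ_eq_add_one, Nat.sub_add_cancel (by omega)]⟩

end Function

namespace MeasureTheory.MeasurePreserving

variable {α : Type*} [MeasurableSpace α] {μ : Measure α} {f : α → α}

theorem measure_wandering_inter_frequently_mem_eq_zero (hf : MeasurePreserving f μ μ)
    (hfe : MeasurableEmbedding f) {A K : Set α} (hA : MeasurableSet A)
    (hwand : ∀ x ∈ A, ∀ n ≠ 0, f^[n] x ∉ A) (hK : μ K ≠ ⊤) :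
    μ (A ∩ {x | ∃ᶠ n in atTop, f^[n] x ∈ K}) = 0 := by
  have hvisit : ∀ n, μ (A ∩ f^[n] ⁻¹' K) = μ.restrict K (f^[n] '' A) := fun n => by
    rw [Measure.restrict_apply ((hfe.iterate n).measurableSet_image.2 hA),
      ← (hf.iterate n).measure_preimage_emb (hfe.iterate n) (f^[n] '' A ∩ K), preimage_inter,
      (hfe.iterate n).injective.preimage_image]
  have hsum : ∑' n, μ (A ∩ f^[n] ⁻¹' K) ≤ μ K := calc
    ∑' n, μ (A ∩ f^[n] ⁻¹' K) = μ.restrict K (⋃ n, f^[n] '' A) := by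
      simp_rw [hvisit]
      exact (measure_iUnion (hfe.injective.pairwise_disjoint_image_iterate hwand)
        fun n => (hfe.iterate n).measurableSet_image.2 hA).symm
    _ ≤ μ K := by simpa using measure_mono (μ := μ.restrict K) (subset_univ _)
  refine measure_mono_null (fun x hx => ?_) (measure_limsup_atTop_eq_zero (ne_top_of_le_ne_top hK hsum))
  rw [mem_limsup_iff_frequently_mem]
  exact hx.2.mono fun n hn => ⟨hx.1, hn⟩

theorem conservative_restrict_frequently_mem (hf : MeasurePreserving f μ μ)
    (hfe : MeasurableEmbedding f) {K : Set α} (hK : μ K ≠ ⊤) :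
    Conservative f (μ.restrict {x | ∃ᶠ n in atTop, f^[n] x ∈ K}) where
  toQuasiMeasurePreserving :=
    hf.quasiMeasurePreserving.restrict (mapsTo_setOf_frequently_iterate_mem f K)
  exists_mem_iterate_mem' s hs hs0 := by
    by_contra! hwand
    rw [Measure.restrict_apply hs] at hs0
    exact hs0 (hf.measure_wandering_inter_frequently_mem_eq_zero hfe hs hwand hK)

variable [TopologicalSpace α] [SecondCountableTopology α] [OpensMeasurableSpace α]

theorem ae_frequently_mem_nhds_of_frequently_mem (hf : MeasurePreserving f μ μ)
    (hfe : MeasurableEmbedding f) {K : Set α} (hKm : MeasurableSet K) (hK : μ K ≠ ⊤) :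
    ∀ᵐ x ∂μ, (∃ᶠ n in atTop, f^[n] x ∈ K) → ∀ s ∈ 𝓝 x, ∃ᶠ n in atTop, f^[n] x ∈ s := by
  have hY : MeasurableSet {x | ∃ᶠ n in atTop, f^[n] x ∈ K} := by
    convert MeasurableSet.measurableSet_limsup fun n => hKm.preimage (hfe.measurable.iterate n)
    ext x
    rw [mem_limsup_iff_frequently_mem]
    rfl
  exact (ae_restrict_iff' hY).1
    (hf.conservative_restrict_frequently_mem hfe hK).ae_frequently_mem_of_mem_nhds

theorem ae_mapClusterPt_self_of_mapClusterPt [IsLocallyFiniteMeasure μ]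
    (hf : MeasurePreserving f μ μ) (hfe : MeasurableEmbedding f) :
    ∀ᵐ x ∂μ, ∀ y, MapClusterPt y atTop (f^[·] x) → MapClusterPt x atTop (f^[·] x) := by
  let S := μ.finiteSpanningSetsInOpen'
  have hrec := ae_all_iff.2 fun i =>
    hf.ae_frequently_mem_nhds_of_frequently_mem hfe (S.set_mem i).measurableSet (S.finite i).ne
  filter_upwards [hrec] with x hx y hy
  obtain ⟨i, hi⟩ := mem_iUnion.1 (S.spanning ▸ mem_univ y)
  exact mapClusterPt_iff_frequently.2
    (hx i (mapClusterPt_iff_frequently.1 hy _ ((S.set_mem i).mem_nhds hi)))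

end MeasureTheory.MeasurePreserving

/-- Hopf's theorem: a bimeasurable bijection of ℝᵏ preserving Lebesgue measure has the
property that almost every point is either recurrent or has empty ω-limit set. -/
theorem hopf_recurrence (k : ℕ) (T : (Fin k → ℝ) ≃ᵐ (Fin k → ℝ))
    (hinv : ∀ A : Set (Fin k → ℝ), MeasurableSet A → volume (⇑T ⁻¹' A) = volume A) :
    ∀ᵐ x ∂(volume : Measure (Fin k → ℝ)),
      (∃ φ : ℕ → ℕ, StrictMono φ ∧
        Filter.Tendsto (fun j => (⇑T)^[φ j] x) Filter.atTop (nhds x)) ∨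
      ¬ ∃ y : Fin k → ℝ, ∃ φ : ℕ → ℕ, StrictMono φ ∧
        Filter.Tendsto (fun j => (⇑T)^[φ j] x) Filter.atTop (nhds y) := by
  have hT : MeasurePreserving T volume volume :=
    ⟨T.measurable, Measure.ext fun s hs => by rw [Measure.map_apply T.measurable hs, hinv s hs]⟩
  filter_upwards [hT.ae_mapClusterPt_self_of_mapClusterPt T.measurableEmbedding] with x hx
  rw [or_iff_not_imp_right, not_not]
  rintro ⟨y, φ, hφ, hy⟩
  exact (hx y (hy.mapClusterPt.of_comp hφ.tendsto_atTop)).tendsto_subseq
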